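/- arXiv:2302.11220 — 6 statements merged into one kernel-verified Lean document; each statement's English description precedes it below -/
import Mathlib

section
/- Under these assumptions, the Frobenius approximation error of the kernel matrix by the first-level truncated eigendecomposition satisfies the lower bound ‖K₁ − H₁Λ₁H₁ᵀ‖_F ≥ sqrt(Σ_{i=s₁+1}^{N} λᵢ²) − √s₂ / |η₂|. -/
open Matrix Finset

/-- Frobenius norm of a real matrix: `‖A‖_F = sqrt(trace(AᵀA))`. -/
noncomputable def frobNorm {m n : ℕ} (A : Matrix (Fin m) (Fin n) ℝ) : ℝ :=
  Real.sqrt ((Aᵀ * A).trace)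

attribute [local instance] Matrix.frobeniusNormedAddCommGroup

lemma frobNorm_eq_norm {m n : ℕ} (A : Matrix (Fin m) (Fin n) ℝ) : frobNorm A = ‖A‖ := by
  rw [Matrix.frobenius_norm_def, ← Real.sqrt_eq_rpow, frobNorm]
  congr 1
  rw [Matrix.trace]
  simp only [Matrix.diag, Matrix.mul_apply, Matrix.transpose_apply, Real.norm_eq_abs, sq_abs]
  rw [Finset.sum_comm]
  simp [pow_two]

/-- Lower bound for the deep approximation error of `K₁` in two-level DKPCA
with linear second level:
`‖K₁ − H₁Λ₁H₁ᵀ‖_F ≥ sqrt(Σ_{i=s₁+1}^{N} λᵢ²) − √s₂ / |η₂|`. -/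
theorem dkpca_approximation_lower_bound
    (N s₁ s₂ : ℕ) (hNpos : 0 < N) (hs₁pos : 0 < s₁) (hs₂pos : 0 < s₂) (hs₁N : s₁ ≤ N)
    (η₂ : ℝ) (hη₂ : η₂ ≠ 0)
    (K₁ : Matrix (Fin N) (Fin N) ℝ) (hK₁ : K₁.IsSymm)
    (H₂ : Matrix (Fin N) (Fin s₂) ℝ) (hH₂ : H₂ᵀ * H₂ = 1)
    (M : Matrix (Fin N) (Fin N) ℝ) (hM : M = K₁ + (1 / η₂) • (H₂ * H₂ᵀ))
    -- λ₁ ≥ … ≥ λ_N : the eigenvalues of M in decreasing order with multiplicity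
    (lam : Fin N → ℝ) (hlam : Antitone lam)
    (U : Matrix (Fin N) (Fin N) ℝ) (hU : Uᵀ * U = 1)
    (hMU : M = U * Matrix.diagonal lam * Uᵀ)
    -- Λ₁ = diag(λ₁,…,λ_{s₁}) and H₁ with orthonormal columns, M H₁ = H₁ Λ₁
    (Λ₁ : Matrix (Fin s₁) (Fin s₁) ℝ)
    (hΛ₁ : Λ₁ = Matrix.diagonal fun i : Fin s₁ => lam (Fin.castLE hs₁N i))
    (H₁ : Matrix (Fin N) (Fin s₁) ℝ) (hH₁ : H₁ᵀ * H₁ = 1)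
    (hMH₁ : M * H₁ = H₁ * Λ₁) :
    Real.sqrt (∑ i ∈ Finset.univ.filter (fun i : Fin N => s₁ ≤ (i : ℕ)), (lam i) ^ 2)
        - Real.sqrt (s₂ : ℝ) / |η₂|
      ≤ frobNorm (K₁ - H₁ * Λ₁ * H₁ᵀ) := by
  set T : Matrix (Fin N) (Fin N) ℝ := H₁ * Λ₁ * H₁ᵀ with hT
  set B : Matrix (Fin N) (Fin N) ℝ := (1 / η₂) • (H₂ * H₂ᵀ) with hB
  -- symmetry facts
  have hMs : Mᵀ = M := by
    rw [hMU]; simp [Matrix.transpose_mul, Matrix.mul_assoc]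
  have hΛs : Λ₁ᵀ = Λ₁ := by rw [hΛ₁, Matrix.diagonal_transpose]
  have hTs : Tᵀ = T := by
    rw [hT]; simp [Matrix.transpose_mul, hΛs, Matrix.mul_assoc]
  -- trace of Λ₁²
  have htrΛ : (Λ₁ * Λ₁).trace = ∑ i : Fin s₁, lam (Fin.castLE hs₁N i) ^ 2 := by
    rw [hΛ₁, Matrix.diagonal_mul_diagonal, Matrix.trace_diagonal]
    simp [pow_two]
  -- trace of M²
  have htrM : (M * M).trace = ∑ i : Fin N, lam i ^ 2 := by
    have h1 : M * M = U * (Matrix.diagonal lam * Matrix.diagonal lam) * Uᵀ := by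
      rw [hMU]
      simp only [Matrix.mul_assoc]
      rw [show Uᵀ * (U * (Matrix.diagonal lam * Uᵀ)) = Matrix.diagonal lam * Uᵀ from by
        rw [← Matrix.mul_assoc, hU, Matrix.one_mul]]
    rw [h1, Matrix.trace_mul_cycle U _ Uᵀ, ← Matrix.mul_assoc, hU, Matrix.one_mul,
      Matrix.diagonal_mul_diagonal, Matrix.trace_diagonal]
    simp [pow_two]
  -- trace of M*T and T*T
  have htrMT : (M * T).trace = (Λ₁ * Λ₁).trace := by
    have h2 : M * T = H₁ * (Λ₁ * Λ₁) * H₁ᵀ := by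
      rw [hT, ← Matrix.mul_assoc, ← Matrix.mul_assoc, hMH₁]
      simp only [Matrix.mul_assoc]
    rw [h2, Matrix.trace_mul_cycle H₁ _ H₁ᵀ, ← Matrix.mul_assoc, hH₁, Matrix.one_mul]
  have htrTT : (T * T).trace = (Λ₁ * Λ₁).trace := by
    have h3 : T * T = H₁ * (Λ₁ * Λ₁) * H₁ᵀ := by
      rw [hT]
      simp only [Matrix.mul_assoc]
      rw [show H₁ᵀ * (H₁ * (Λ₁ * H₁ᵀ)) = Λ₁ * H₁ᵀ from by
        rw [← Matrix.mul_assoc, hH₁, Matrix.one_mul]]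
    rw [h3, Matrix.trace_mul_cycle H₁ _ H₁ᵀ, ← Matrix.mul_assoc, hH₁, Matrix.one_mul]
  -- total trace of the residual
  have key : ((M - T)ᵀ * (M - T)).trace
      = ∑ i ∈ Finset.univ.filter (fun i : Fin N => s₁ ≤ (i : ℕ)), (lam i) ^ 2 := by
    have hexp : (M - T)ᵀ * (M - T) = M * M - M * T - T * M + T * T := by
      rw [Matrix.transpose_sub, hMs, hTs]
      noncomm_ring
    have htrTM : (T * M).trace = (M * T).trace := Matrix.trace_mul_comm T M
    rw [hexp, Matrix.trace_add, Matrix.trace_sub, Matrix.trace_sub, htrTM, htrMT, htrTT,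
      htrM]
    have hsplit : ∑ i : Fin N, lam i ^ 2
        = ∑ i ∈ Finset.univ.filter (fun i : Fin N => s₁ ≤ (i : ℕ)), lam i ^ 2
          + ∑ i ∈ Finset.univ.filter (fun i : Fin N => ¬ s₁ ≤ (i : ℕ)), lam i ^ 2 :=
      (Finset.sum_filter_add_sum_filter_not _ _ _).symm
    have hlow : ∑ i ∈ Finset.univ.filter (fun i : Fin N => ¬ s₁ ≤ (i : ℕ)), lam i ^ 2
        = ∑ i : Fin s₁, lam (Fin.castLE hs₁N i) ^ 2 := by
      rw [show ∑ i : Fin s₁, lam (Fin.castLE hs₁N i) ^ 2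
          = ∑ i ∈ Finset.univ.map (Fin.castLEEmb hs₁N), lam i ^ 2 from
        (Finset.sum_map Finset.univ (Fin.castLEEmb hs₁N) (fun i => lam i ^ 2)).symm]
      congr 1
      ext i
      simp only [Finset.mem_filter, Finset.mem_univ, true_and, Finset.mem_map,
        Fin.castLEEmb_apply, not_le]
      constructor
      · intro h; exact ⟨⟨(i : ℕ), h⟩, rfl⟩
      · rintro ⟨j, rfl⟩; exact j.isLt
    rw [htrΛ, hsplit, hlow]
    ring
  have hA : frobNorm (M - T)
      = Real.sqrt (∑ i ∈ Finset.univ.filter (fun i : Fin N => s₁ ≤ (i : ℕ)), (lam i) ^ 2) := by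
    rw [frobNorm, key]
  -- Frobenius norm of B
  have hBnorm : frobNorm B = Real.sqrt (s₂ : ℝ) / |η₂| := by
    have hCs : (H₂ * H₂ᵀ)ᵀ = H₂ * H₂ᵀ := by simp [Matrix.transpose_mul]
    have hCC : (H₂ * H₂ᵀ) * (H₂ * H₂ᵀ) = H₂ * H₂ᵀ := by
      rw [Matrix.mul_assoc, ← Matrix.mul_assoc H₂ᵀ H₂ H₂ᵀ, hH₂, Matrix.one_mul]
    have htrC : (H₂ * H₂ᵀ).trace = (s₂ : ℝ) := by
      rw [Matrix.trace_mul_comm, hH₂, Matrix.trace_one]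
      simp
    have : Bᵀ * B = ((1 / η₂) ^ 2) • (H₂ * H₂ᵀ) := by
      rw [hB, Matrix.transpose_smul, hCs, Matrix.smul_mul, Matrix.mul_smul, hCC,
        smul_smul, ← pow_two]
    rw [frobNorm, this, Matrix.trace_smul, smul_eq_mul, htrC,
      Real.sqrt_mul (sq_nonneg _), Real.sqrt_sq_eq_abs]
    rw [abs_div, abs_one]
    ring
  -- conclude by the triangle inequality
  have hKT : K₁ - T = (M - T) - B := by
    rw [hM, hB]; abel
  calc Real.sqrt (∑ i ∈ Finset.univ.filter (fun i : Fin N => s₁ ≤ (i : ℕ)), (lam i) ^ 2)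
        - Real.sqrt (s₂ : ℝ) / |η₂|
      = ‖M - T‖ - ‖B‖ := by rw [← frobNorm_eq_norm, ← frobNorm_eq_norm, hA, hBnorm]
    _ ≤ ‖(M - T) - B‖ := norm_sub_norm_le _ _
    _ = frobNorm (K₁ - T) := by rw [frobNorm_eq_norm, hKT]
end

section
/- If in addition K₁ is positive semidefinite, η₂ < 0, s₂ ≤ N, and the entries λ₁,…,λ_{s₁} of Λ₁ are nonnegative, then ‖K₁ − H₁Λ₁H₁ᵀ‖²_F ≤ Σ_{i=s₁+1}^{N} λᵢ² − (s₂/η₂ + 2·Σ_{i=1}^{s₂} λ̃ᵢ)·(1/η₂), where λ̃₁ ≥ … ≥ λ̃_N are the eigenvalues of K₁ in decreasing order with multiplicity. -/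
/-!
Write `K₁ - H₁Λ₁H₁ᵀ = E - η₂⁻¹ P` with `E = M - H₁Λ₁H₁ᵀ` and `P = H₂H₂ᵀ` the orthogonal
projection onto the columns of `H₂`. Expanding the Frobenius norm, `‖E‖²` is the tail
`∑_{i > s₁} λᵢ²`, `‖P‖² = s₂`, and the cross term is
`tr(EP) = tr(K₁P) + s₂/η₂ - tr(H₁Λ₁H₁ᵀP)`. As `η₂ < 0`, the bound reduces to
`tr(K₁P) - tr(H₁Λ₁H₁ᵀP) ≤ ∑_{i ≤ s₂} λ̃ᵢ`. Here `tr(H₁Λ₁H₁ᵀP) ≥ 0` because `Λ₁ ≥ 0`, and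
`tr(K₁P) ≤ ∑_{i ≤ s₂} λ̃ᵢ` is Ky Fan's maximum principle: the diagonal of `VᵀPV` has entries
in `[0, 1]` summing to `s₂`, and this mass is best placed on the `s₂` largest eigenvalues.
-/

open Matrix Finset

theorem Finset.sum_mul_le_sum_of_threshold {ι : Type*} [Fintype ι] [DecidableEq ι]
    (s : Finset ι) {a q : ι → ℝ} {c : ℝ}
    (ha_mem : ∀ j ∈ s, c ≤ a j) (ha_not_mem : ∀ j ∉ s, a j ≤ c)
    (hq₀ : ∀ j, 0 ≤ q j) (hq₁ : ∀ j, q j ≤ 1) (hq : ∑ j, q j = #s) :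
    ∑ j, a j * q j ≤ ∑ j ∈ s, a j := by
  have hdecomp : ∑ j ∈ s, a j - ∑ j, a j * q j
      = ∑ j ∈ s, (a j - c) * (1 - q j) + ∑ j ∈ sᶜ, (c - a j) * q j := by
    rw [← sum_add_sum_compl s q] at hq
    rw [← sum_add_sum_compl s]
    simp only [mul_sub, sub_mul, mul_one, sum_sub_distrib, ← mul_sum, sum_const, nsmul_eq_mul]
    linear_combination (-c) * hq
  have hnonneg : 0 ≤ ∑ j ∈ s, (a j - c) * (1 - q j) + ∑ j ∈ sᶜ, (c - a j) * q j :=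
    add_nonneg
      (sum_nonneg fun j hj => mul_nonneg (sub_nonneg.2 (ha_mem j hj)) (sub_nonneg.2 (hq₁ j)))
      (sum_nonneg fun j hj =>
        mul_nonneg (sub_nonneg.2 (ha_not_mem j (mem_compl.1 hj))) (hq₀ j))
  linarith

theorem Antitone.sum_mul_le_sum_filter_lt {N k : ℕ} (hk : k ≤ N) {a q : Fin N → ℝ}
    (ha : Antitone a) (hq₀ : ∀ j, 0 ≤ q j) (hq₁ : ∀ j, q j ≤ 1) (hq : ∑ j, q j = k) :
    ∑ j, a j * q j ≤ ∑ j ∈ univ.filter (fun j : Fin N => (j : ℕ) < k), a j := by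
  rcases N.eq_zero_or_pos with rfl | hN
  · simp
  -- the threshold `a (k - 1)` also works for `k = 0`, where it is `a 0`
  refine sum_mul_le_sum_of_threshold _ (c := a ⟨k - 1, by omega⟩) ?_ ?_ hq₀ hq₁ ?_
  · intro j hj
    exact ha (Fin.le_def.2 (by simp at hj ⊢; omega))
  · intro j hj
    exact ha (Fin.le_def.2 (by simp at hj ⊢; omega))
  · rw [hq, Fin.card_filter_val_lt, min_eq_right hk]

theorem Fin.sum_filter_val_lt_eq_sum_castLE {M : Type*} [AddCommMonoid M] {N s : ℕ}
    (h : s ≤ N) (f : Fin N → M) :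
    ∑ i ∈ univ.filter (fun i : Fin N => (i : ℕ) < s), f i = ∑ i : Fin s, f (Fin.castLE h i) := by
  have hrange : univ.filter (fun i : Fin N => (i : ℕ) < s) = univ.map (Fin.castLEEmb h) := by
    ext i
    simpa using ⟨fun hi => ⟨⟨i, hi⟩, rfl⟩, fun ⟨j, hj⟩ => hj ▸ j.isLt⟩
  rw [hrange, sum_map]
  rfl

namespace Matrix

theorem IsSymm.mul_mul_transpose {m n α : Type*} [Fintype n] [CommSemiring α]
    {A : Matrix n n α} (hA : A.IsSymm) (B : Matrix m n α) : (B * A * Bᵀ).IsSymm := by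
  simp [IsSymm, transpose_mul, hA.eq, Matrix.mul_assoc]

variable {m n : Type*} [Fintype m] [Fintype n]

theorem trace_transpose_mul_self_nonneg (A : Matrix m n ℝ) : 0 ≤ (Aᵀ * A).trace :=
  sum_nonneg fun _ _ => sum_nonneg fun _ _ => mul_self_nonneg _

theorem IsSymm.apply_self_mem_Icc_of_mul_self {P : Matrix m m ℝ} (hP : P.IsSymm)
    (hPP : P * P = P) (i : m) : P i i ∈ Set.Icc 0 1 := by
  have hdiag : P i i = ∑ j, P i j ^ 2 := by
    conv_lhs => rw [← hPP, mul_apply]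
    exact sum_congr rfl fun j _ => by rw [hP.apply i j, sq]
  have hsq : P i i ^ 2 ≤ P i i :=
    hdiag ▸ single_le_sum (fun j _ => sq_nonneg (P i j)) (mem_univ i)
  have hnonneg : 0 ≤ P i i := hdiag ▸ sum_nonneg fun j _ => sq_nonneg (P i j)
  exact ⟨hnonneg, by nlinarith⟩

variable [DecidableEq n] {H : Matrix m n ℝ}

theorem trace_mul_mul_transpose_of_transpose_mul_self (hH : Hᵀ * H = 1) (X : Matrix n n ℝ) :
    (H * X * Hᵀ).trace = X.trace := by
  rw [trace_mul_comm, ← Matrix.mul_assoc, hH, Matrix.one_mul]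

theorem mul_transpose_mul_self_of_transpose_mul_self (hH : Hᵀ * H = 1) :
    H * Hᵀ * (H * Hᵀ) = H * Hᵀ := by
  rw [Matrix.mul_assoc, ← Matrix.mul_assoc Hᵀ, hH, Matrix.one_mul]

theorem trace_mul_transpose_of_transpose_mul_self (hH : Hᵀ * H = 1) :
    (H * Hᵀ).trace = Fintype.card n := by
  rw [trace_mul_comm, hH, trace_one]

theorem mul_transpose_apply_self_mem_Icc (hH : Hᵀ * H = 1) (i : m) :
    (H * Hᵀ) i i ∈ Set.Icc 0 1 :=
  IsSymm.apply_self_mem_Icc_of_mul_self (by simp [IsSymm, transpose_mul])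
    (mul_transpose_mul_self_of_transpose_mul_self hH) i

theorem trace_mul_diagonal_mul_transpose_mul_nonneg {k : Type*} [Fintype k] {d : n → ℝ}
    (hd : 0 ≤ d) (G : Matrix m k ℝ) : 0 ≤ (H * diagonal d * Hᵀ * (G * Gᵀ)).trace := by
  have hpsd := (PosSemidef.diagonal hd).mul_mul_conjTranspose_same (Gᵀ * H)
  rw [conjTranspose_eq_transpose_of_trivial] at hpsd
  have hcycle : (H * diagonal d * Hᵀ * (G * Gᵀ)).trace
      = (Gᵀ * H * diagonal d * (Gᵀ * H)ᵀ).trace := by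
    rw [← Matrix.mul_assoc, trace_mul_comm]
    simp only [transpose_mul, transpose_transpose, Matrix.mul_assoc]
  exact hcycle ▸ hpsd.trace_nonneg

theorem trace_transpose_mul_self_sub_smul_mul_transpose (hH : Hᵀ * H = 1)
    (X : Matrix m m ℝ) (c : ℝ) :
    ((X - c • (H * Hᵀ))ᵀ * (X - c • (H * Hᵀ))).trace
      = (Xᵀ * X).trace - 2 * c * (Xᵀ * (H * Hᵀ)).trace + c ^ 2 * Fintype.card n := by
  have hP : (H * Hᵀ)ᵀ = H * Hᵀ := by simp [transpose_mul]
  have hPX : (H * Hᵀ * X).trace = (Xᵀ * (H * Hᵀ)).trace := by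
    rw [← trace_transpose, transpose_mul, hP]
  simp only [transpose_sub, transpose_smul, hP, Matrix.sub_mul, Matrix.mul_sub, Matrix.smul_mul,
    Matrix.mul_smul, trace_sub, trace_smul, hPX, mul_transpose_mul_self_of_transpose_mul_self hH,
    trace_mul_transpose_of_transpose_mul_self hH, smul_eq_mul]
  ring

theorem trace_transpose_mul_self_sub_mul_mul_transpose {M : Matrix m m ℝ} {Λ : Matrix n n ℝ}
    (hM : M.IsSymm) (hΛ : Λ.IsSymm) (hH : Hᵀ * H = 1) (hMH : M * H = H * Λ) :
    ((M - H * Λ * Hᵀ)ᵀ * (M - H * Λ * Hᵀ)).trace = (M * M).trace - (Λ * Λ).trace := by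
  have hMB : M * (H * Λ * Hᵀ) = H * (Λ * Λ) * Hᵀ := by
    rw [← Matrix.mul_assoc, ← Matrix.mul_assoc, hMH]; simp only [Matrix.mul_assoc]
  have hBB : H * Λ * Hᵀ * (H * Λ * Hᵀ) = H * (Λ * Λ) * Hᵀ := by
    rw [show H * Λ * Hᵀ * (H * Λ * Hᵀ) = H * Λ * (Hᵀ * H) * Λ * Hᵀ by
      simp only [Matrix.mul_assoc], hH, Matrix.mul_one]
    simp only [Matrix.mul_assoc]
  have hMB' : (H * Λ * Hᵀ * M).trace = (H * (Λ * Λ) * Hᵀ).trace := by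
    rw [trace_mul_comm, hMB]
  rw [(hM.sub (hΛ.mul_mul_transpose H)).eq]
  simp only [Matrix.sub_mul, Matrix.mul_sub, trace_sub, hMB, hMB', hBB,
    trace_mul_mul_transpose_of_transpose_mul_self hH]
  ring

theorem trace_mul_diagonal_mul_transpose_mul_self {U : Matrix n n ℝ} (hU : Uᵀ * U = 1)
    (d : n → ℝ) :
    (U * diagonal d * Uᵀ * (U * diagonal d * Uᵀ)).trace = ∑ i, d i ^ 2 := by
  rw [show U * diagonal d * Uᵀ * (U * diagonal d * Uᵀ)
      = U * diagonal d * (Uᵀ * U) * diagonal d * Uᵀ by simp only [Matrix.mul_assoc], hU,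
    Matrix.mul_one, Matrix.mul_assoc U, trace_mul_mul_transpose_of_transpose_mul_self hU,
    diagonal_mul_diagonal, trace_diagonal]
  simp only [sq]

end Matrix

open Matrix in
theorem trace_mul_diagonal_mul_transpose_mul_le_sum_filter_lt {N k : ℕ} (hk : k ≤ N)
    {V : Matrix (Fin N) (Fin N) ℝ} (hV : Vᵀ * V = 1) {d : Fin N → ℝ} (hd : Antitone d)
    {H : Matrix (Fin N) (Fin k) ℝ} (hH : Hᵀ * H = 1) :
    (V * diagonal d * Vᵀ * (H * Hᵀ)).trace
      ≤ ∑ j ∈ univ.filter (fun j : Fin N => (j : ℕ) < k), d j := by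
  set W := Vᵀ * H
  have hW : Wᵀ * W = 1 := by
    rw [transpose_mul, transpose_transpose, Matrix.mul_assoc, ← Matrix.mul_assoc V,
      mul_eq_one_comm.mp hV, Matrix.one_mul, hH]
  have htrace : (V * diagonal d * Vᵀ * (H * Hᵀ)).trace = ∑ j, d j * (W * Wᵀ) j j := by
    rw [Matrix.mul_assoc, Matrix.mul_assoc, trace_mul_comm]
    simp only [W, trace, diag_apply, transpose_mul, transpose_transpose, Matrix.mul_assoc,
      diagonal_mul]
  rw [htrace]
  refine hd.sum_mul_le_sum_filter_lt hk (fun j => (mul_transpose_apply_self_mem_Icc hW j).1)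
    (fun j => (mul_transpose_apply_self_mem_Icc hW j).2) ?_
  simpa [trace] using trace_mul_transpose_of_transpose_mul_self hW

theorem frobNorm_sq {m n : ℕ} (A : Matrix (Fin m) (Fin n) ℝ) :
    frobNorm A ^ 2 = (Aᵀ * A).trace :=
  Real.sq_sqrt (trace_transpose_mul_self_nonneg A)

theorem dkpca_approximation_upper_bound_neg_general
    (N s₁ s₂ : ℕ)
    (hs₁N : s₁ ≤ N) (hs₂N : s₂ ≤ N)
    (η₂ : ℝ) (hη₂ : η₂ < 0)
    (K₁ : Matrix (Fin N) (Fin N) ℝ)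
    (H₂ : Matrix (Fin N) (Fin s₂) ℝ) (hH₂ : H₂ᵀ * H₂ = 1)
    (M : Matrix (Fin N) (Fin N) ℝ) (hM : M = K₁ + (1 / η₂) • (H₂ * H₂ᵀ))
    -- λ₁ ≥ … ≥ λ_N : the eigenvalues of M in decreasing order with multiplicity
    (lam : Fin N → ℝ)
    (U : Matrix (Fin N) (Fin N) ℝ) (hU : Uᵀ * U = 1)
    (hMU : M = U * Matrix.diagonal lam * Uᵀ)
    -- λ̃₁ ≥ … ≥ λ̃_N : the eigenvalues of K₁ in decreasing order with multiplicity
    (lamt : Fin N → ℝ) (hlamt : Antitone lamt)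
    (V : Matrix (Fin N) (Fin N) ℝ) (hV : Vᵀ * V = 1)
    (hK₁V : K₁ = V * Matrix.diagonal lamt * Vᵀ)
    -- Λ₁ = diag(λ₁,…,λ_{s₁}) with nonnegative entries, H₁ orthonormal, M H₁ = H₁ Λ₁
    (Λ₁ : Matrix (Fin s₁) (Fin s₁) ℝ)
    (hΛ₁ : Λ₁ = Matrix.diagonal fun i : Fin s₁ => lam (Fin.castLE hs₁N i))
    (hΛ₁nonneg : ∀ i : Fin s₁, 0 ≤ lam (Fin.castLE hs₁N i))
    (H₁ : Matrix (Fin N) (Fin s₁) ℝ) (hH₁ : H₁ᵀ * H₁ = 1)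
    (hMH₁ : M * H₁ = H₁ * Λ₁) :
    (frobNorm (K₁ - H₁ * Λ₁ * H₁ᵀ)) ^ 2
      ≤ (∑ i ∈ Finset.univ.filter (fun i : Fin N => s₁ ≤ (i : ℕ)), (lam i) ^ 2)
        - ((s₂ : ℝ) / η₂
            + 2 * ∑ i ∈ Finset.univ.filter (fun i : Fin N => (i : ℕ) < s₂), lamt i)
          * (1 / η₂) := by
  set c := 1 / η₂
  set B := H₁ * Λ₁ * H₁ᵀ
  have hMsymm : M.IsSymm := hMU ▸ (isSymm_diagonal lam).mul_mul_transpose U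
  have hΛ₁symm : Λ₁.IsSymm := hΛ₁ ▸ isSymm_diagonal _
  have hdecomp : K₁ - B = (M - B) - c • (H₂ * H₂ᵀ) := by rw [hM]; abel
  have htail : ((M - B)ᵀ * (M - B)).trace
      = ∑ i ∈ univ.filter (fun i : Fin N => s₁ ≤ (i : ℕ)), lam i ^ 2 := by
    rw [trace_transpose_mul_self_sub_mul_mul_transpose hMsymm hΛ₁symm hH₁ hMH₁, hMU,
      trace_mul_diagonal_mul_transpose_mul_self hU, hΛ₁, diagonal_mul_diagonal, trace_diagonal,
      ← sum_filter_not_add_sum_filter univ (fun i : Fin N => (i : ℕ) < s₁),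
      Fin.sum_filter_val_lt_eq_sum_castLE hs₁N]
    simp only [not_lt, sq, add_sub_cancel_right]
  have hcross : ((M - B)ᵀ * (H₂ * H₂ᵀ)).trace
      = (K₁ * (H₂ * H₂ᵀ)).trace + c * s₂ - (B * (H₂ * H₂ᵀ)).trace := by
    rw [(hMsymm.sub (hΛ₁symm.mul_mul_transpose H₁)).eq, Matrix.sub_mul, trace_sub, hM,
      Matrix.add_mul, trace_add, Matrix.smul_mul, trace_smul,
      mul_transpose_mul_self_of_transpose_mul_self hH₂,
      trace_mul_transpose_of_transpose_mul_self hH₂, Fintype.card_fin, smul_eq_mul]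
  have hKyFan := hK₁V ▸ trace_mul_diagonal_mul_transpose_mul_le_sum_filter_lt hs₂N hV hlamt hH₂
  have hBP : 0 ≤ (B * (H₂ * H₂ᵀ)).trace := by
    simpa only [B, hΛ₁] using trace_mul_diagonal_mul_transpose_mul_nonneg (H := H₁) hΛ₁nonneg H₂
  have hsign := mul_nonpos_of_nonpos_of_nonneg (one_div_neg.2 hη₂).le
    (add_nonneg (sub_nonneg.2 hKyFan) hBP)
  rw [frobNorm_sq, hdecomp, trace_transpose_mul_self_sub_smul_mul_transpose hH₂, htail, hcross,
    Fintype.card_fin, div_eq_mul_one_div (s₂ : ℝ)]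
  linarith

/-- Upper bound for the deep approximation error of `K₁` when `η₂ < 0`:
`‖K₁ − H₁Λ₁H₁ᵀ‖²_F ≤ Σ_{i=s₁+1}^{N} λᵢ² − (s₂/η₂ + 2·Σ_{i=1}^{s₂} λ̃ᵢ)·(1/η₂)`. -/
theorem dkpca_approximation_upper_bound_neg
    (N s₁ s₂ : ℕ) (hNpos : 0 < N) (hs₁pos : 0 < s₁) (hs₂pos : 0 < s₂)
    (hs₁N : s₁ ≤ N) (hs₂N : s₂ ≤ N)
    (η₂ : ℝ) (hη₂ : η₂ < 0)
    (K₁ : Matrix (Fin N) (Fin N) ℝ) (hK₁ : K₁.IsSymm) (hK₁psd : K₁.PosSemidef)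
    (H₂ : Matrix (Fin N) (Fin s₂) ℝ) (hH₂ : H₂ᵀ * H₂ = 1)
    (M : Matrix (Fin N) (Fin N) ℝ) (hM : M = K₁ + (1 / η₂) • (H₂ * H₂ᵀ))
    -- λ₁ ≥ … ≥ λ_N : the eigenvalues of M in decreasing order with multiplicity
    (lam : Fin N → ℝ) (hlam : Antitone lam)
    (U : Matrix (Fin N) (Fin N) ℝ) (hU : Uᵀ * U = 1)
    (hMU : M = U * Matrix.diagonal lam * Uᵀ)
    -- λ̃₁ ≥ … ≥ λ̃_N : the eigenvalues of K₁ in decreasing order with multiplicity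
    (lamt : Fin N → ℝ) (hlamt : Antitone lamt)
    (V : Matrix (Fin N) (Fin N) ℝ) (hV : Vᵀ * V = 1)
    (hK₁V : K₁ = V * Matrix.diagonal lamt * Vᵀ)
    -- Λ₁ = diag(λ₁,…,λ_{s₁}) with nonnegative entries, H₁ orthonormal, M H₁ = H₁ Λ₁
    (Λ₁ : Matrix (Fin s₁) (Fin s₁) ℝ)
    (hΛ₁ : Λ₁ = Matrix.diagonal fun i : Fin s₁ => lam (Fin.castLE hs₁N i))
    (hΛ₁nonneg : ∀ i : Fin s₁, 0 ≤ lam (Fin.castLE hs₁N i))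
    (H₁ : Matrix (Fin N) (Fin s₁) ℝ) (hH₁ : H₁ᵀ * H₁ = 1)
    (hMH₁ : M * H₁ = H₁ * Λ₁) :
    (frobNorm (K₁ - H₁ * Λ₁ * H₁ᵀ)) ^ 2
      ≤ (∑ i ∈ Finset.univ.filter (fun i : Fin N => s₁ ≤ (i : ℕ)), (lam i) ^ 2)
        - ((s₂ : ℝ) / η₂
            + 2 * ∑ i ∈ Finset.univ.filter (fun i : Fin N => (i : ℕ) < s₂), lamt i)
          * (1 / η₂) :=
  dkpca_approximation_upper_bound_neg_general N s₁ s₂ hs₁N hs₂N η₂ hη₂ K₁ H₂ hH₂ M hM lam U hU hMU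
    lamt hlamt V hV hK₁V Λ₁ hΛ₁ hΛ₁nonneg H₁ hH₁ hMH₁
end

section
/- Let N ≥ 2 and let λ̃₁ ≥ λ̃₂ ≥ … ≥ λ̃_N > 0 be positive reals listed in decreasing order that are not all equal (λ̃₁ > λ̃_N). Let η₂ be a real with η₂ < −1/λ̃_N, and set λᵢ = λ̃ᵢ + 1/η₂ for each i (so each λᵢ > 0). Then for every n with 1 ≤ n < N, (Σ_{j=1}^{n} λⱼ)/(Σ_{i=1}^{N} λᵢ) > (Σ_{j=1}^{n} λ̃ⱼ)/(Σ_{i=1}^{N} λ̃ᵢ); that is, the variance explained by the top n deep principal components of the two-level deep kernel PCA strictly exceeds the variance explained by the top n principal components of shallow kernel PCA. -/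
/-!
With `c = 1/η₂ < 0`, shifting every eigenvalue by `c` turns the explained fraction `S/T` of the
top `n` eigenvalues into `(S + n c)/(T + N c)`. Cross-multiplying, this is larger exactly when
`n T < N S`, i.e. when the top `n` eigenvalues have a larger mean than all `N` of them, which holds
strictly for a non-constant decreasing sequence.
-/

open Finset

theorem Finset.card_mul_sum_lt_card_mul_sum {ι R : Type*} [CommRing R] [LinearOrder R]
    [IsStrictOrderedRing R] {A B : Finset ι} {f : ι → R}
    (hle : ∀ a ∈ A, ∀ b ∈ B, f b ≤ f a) {a₀ b₀ : ι} (ha₀ : a₀ ∈ A) (hb₀ : b₀ ∈ B)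
    (hlt : f b₀ < f a₀) :
    #A * ∑ b ∈ B, f b < #B * ∑ a ∈ A, f a := by
  have hpos : 0 < ∑ a ∈ A, ∑ b ∈ B, (f a - f b) :=
    sum_pos' (fun a ha => sum_nonneg fun b hb => sub_nonneg.mpr (hle a ha b hb))
      ⟨a₀, ha₀, sum_pos' (fun b hb => sub_nonneg.mpr (hle a₀ ha₀ b hb))
        ⟨b₀, hb₀, sub_pos.mpr hlt⟩⟩
  have hexpand : ∑ a ∈ A, ∑ b ∈ B, (f a - f b) = #B * ∑ a ∈ A, f a - #A * ∑ b ∈ B, f b := by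
    simp only [sum_sub_distrib, sum_const, nsmul_eq_mul, mul_sum]
  linarith

theorem Antitone.mul_sum_lt_mul_sum_filter_lt {R : Type*} [CommRing R] [LinearOrder R]
    [IsStrictOrderedRing R] {N n : ℕ} {f : Fin N → R} (hf : Antitone f) {i j : Fin N}
    (hi : (i : ℕ) < n) (hj : n ≤ (j : ℕ)) (hlt : f j < f i) :
    n * ∑ k, f k < N * ∑ k ∈ univ.filter (fun k : Fin N => (k : ℕ) < n), f k := by
  set A := univ.filter (fun k : Fin N => (k : ℕ) < n)
  set B := univ.filter (fun k : Fin N => ¬(k : ℕ) < n)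
  have hcardA : #A = n := by
    rw [Fin.card_filter_val_lt]
    exact min_eq_right (hj.trans j.isLt.le)
  have hcard : (N : R) = #A + #B := by
    exact_mod_cast ((card_filter_add_card_filter_not (s := univ) _).trans (card_fin N)).symm
  have hsplit : ∑ k, f k = ∑ k ∈ A, f k + ∑ k ∈ B, f k :=
    (sum_filter_add_sum_filter_not _ _ _).symm
  have hAB : #A * ∑ k ∈ B, f k < #B * ∑ k ∈ A, f k :=
    card_mul_sum_lt_card_mul_sum
      (fun a ha b hb => hf (Fin.le_def.mpr (by simp only [A, B, mem_filter] at ha hb; omega)))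
      (by simpa [A] using hi) (by simpa [B] using hj) hlt
  rw [hsplit, hcard, ← hcardA]
  linarith

theorem div_lt_add_mul_div_add_mul_of_neg {K : Type*} [Field K] [LinearOrder K]
    [IsStrictOrderedRing K] {S T c n N : K} (hT : 0 < T) (hT' : 0 < T + N * c) (hc : c < 0)
    (h : n * T < N * S) :
    S / T < (S + n * c) / (T + N * c) := by
  rw [div_lt_div_iff₀ hT hT']
  nlinarith [mul_lt_mul_of_neg_right h hc]

/-- Explained-variance lemma for two-level deep kernel PCA (full decomposition):
if `η₂ < −1/λ̃_N` then for every `1 ≤ n < N` the deep eigenvalues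
`λᵢ = λ̃ᵢ + 1/η₂` explain a strictly larger fraction of the variance than the
shallow eigenvalues `λ̃ᵢ`. -/
theorem dkpca_explained_variance_gt_shallow
    (N : ℕ) (hN : 2 ≤ N)
    (lamt : Fin N → ℝ) (hanti : Antitone lamt) (hpos : ∀ i, 0 < lamt i)
    (hne : lamt ⟨N - 1, by omega⟩ < lamt ⟨0, by omega⟩)
    (η₂ : ℝ) (hη₂ : η₂ < -1 / lamt ⟨N - 1, by omega⟩)
    (lam : Fin N → ℝ) (hlam : ∀ i, lam i = lamt i + 1 / η₂)
    -- (so each λᵢ > 0)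
    (hlampos : ∀ i, 0 < lam i)
    (n : ℕ) (hn1 : 1 ≤ n) (hnN : n < N) :
    (∑ j ∈ Finset.univ.filter (fun j : Fin N => (j : ℕ) < n), lamt j) / (∑ i, lamt i)
      < (∑ j ∈ Finset.univ.filter (fun j : Fin N => (j : ℕ) < n), lam j) / (∑ i, lam i) := by
  have hc : 1 / η₂ < 0 :=
    one_div_neg.mpr (hη₂.trans (div_neg_of_neg_of_pos neg_one_lt_zero (hpos _)))
  have hsum : ∑ i, lam i = ∑ i, lamt i + N * (1 / η₂) := by
    simp [hlam, sum_add_distrib]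
  have hsum_top : ∑ j ∈ univ.filter (fun j : Fin N => (j : ℕ) < n), lam j
      = ∑ j ∈ univ.filter (fun j : Fin N => (j : ℕ) < n), lamt j + n * (1 / η₂) := by
    simp [hlam, sum_add_distrib, Fin.card_filter_val_lt, hnN.le]
  have : Nonempty (Fin N) := ⟨⟨0, by omega⟩⟩
  rw [hsum, hsum_top]
  exact div_lt_add_mul_div_add_mul_of_neg (sum_pos (fun i _ => hpos i) univ_nonempty)
    (hsum ▸ sum_pos (fun i _ => hlampos i) univ_nonempty) hc
    (hanti.mul_sum_lt_mul_sum_filter_lt (i := ⟨0, by omega⟩) (j := ⟨N - 1, by omega⟩)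
      (by simp only; omega) (by simp only; omega) hne)
end

section
/- Let d, s₁, s₂, N be positive integers, let φ₁,…,φ_N ∈ ℝ^d, let η₁, η₂ be nonzero reals, let Λ₁ and Λ₂ be real diagonal matrices of sizes s₁×s₁ and s₂×s₂, and let h⁽¹⁾ᵢ ∈ ℝ^{s₁}, h⁽²⁾ᵢ ∈ ℝ^{s₂} for i = 1,…,N. Define W₁ = (1/η₁)·Σᵢ φᵢ(h⁽¹⁾ᵢ)ᵀ, W₂ = (1/η₂)·Σᵢ h⁽¹⁾ᵢ(h⁽²⁾ᵢ)ᵀ, the Gram matrix K₁ with (K₁)_{ij} = φᵢᵀφⱼ, and the matrices H₁ (rows (h⁽¹⁾ᵢ)ᵀ) and H₂ (rows (h⁽²⁾ᵢ)ᵀ). If the stationarity conditions W₁ᵀφᵢ = Λ₁h⁽¹⁾ᵢ − W₂h⁽²⁾ᵢ and W₂ᵀh⁽¹⁾ᵢ = Λ₂h⁽²⁾ᵢ hold for all i = 1,…,N, then the coupled dual system holds: ((1/η₁)·K₁ + (1/η₂)·H₂H₂ᵀ)·H₁ = H₁·Λ₁ and (1/η₂)·H₁H₁ᵀ·H₂ =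 H₂·Λ₂. -/
open Matrix Finset

/-- Eliminating the interconnection matrices `W₁, W₂` from the stationarity
conditions of two-level deep kernel PCA with linear second level yields the
coupled dual eigenvalue system with forward and backward couplings:
`((1/η₁)K₁ + (1/η₂)H₂H₂ᵀ)H₁ = H₁Λ₁` and `(1/η₂)H₁H₁ᵀH₂ = H₂Λ₂`. -/
theorem dkpca_two_level_stationarity_implies_coupled_dual_system
    (d s₁ s₂ N : ℕ) (hd : 0 < d) (hs₁ : 0 < s₁) (hs₂ : 0 < s₂) (hN : 0 < N)
    (φ : Fin N → (Fin d → ℝ))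
    (η₁ η₂ : ℝ) (hη₁ : η₁ ≠ 0) (hη₂ : η₂ ≠ 0)
    (d1 : Fin s₁ → ℝ) (Λ₁ : Matrix (Fin s₁) (Fin s₁) ℝ) (hΛ₁ : Λ₁ = Matrix.diagonal d1)
    (d2 : Fin s₂ → ℝ) (Λ₂ : Matrix (Fin s₂) (Fin s₂) ℝ) (hΛ₂ : Λ₂ = Matrix.diagonal d2)
    (h1 : Fin N → (Fin s₁ → ℝ)) (h2 : Fin N → (Fin s₂ → ℝ))
    (W₁ : Matrix (Fin d) (Fin s₁) ℝ)
    (hW₁ : W₁ = (1 / η₁) • ∑ i, Matrix.vecMulVec (φ i) (h1 i))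
    (W₂ : Matrix (Fin s₁) (Fin s₂) ℝ)
    (hW₂ : W₂ = (1 / η₂) • ∑ i, Matrix.vecMulVec (h1 i) (h2 i))
    (K₁ : Matrix (Fin N) (Fin N) ℝ) (hK₁ : ∀ i j, K₁ i j = (φ i) ⬝ᵥ (φ j))
    (H₁ : Matrix (Fin N) (Fin s₁) ℝ) (hH₁ : ∀ i, H₁ i = h1 i)
    (H₂ : Matrix (Fin N) (Fin s₂) ℝ) (hH₂ : ∀ i, H₂ i = h2 i)
    (hstat₁ : ∀ i, W₁ᵀ.mulVec (φ i) = Λ₁.mulVec (h1 i) - W₂.mulVec (h2 i))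
    (hstat₂ : ∀ i, W₂ᵀ.mulVec (h1 i) = Λ₂.mulVec (h2 i)) :
    ((1 / η₁) • K₁ + (1 / η₂) • (H₂ * H₂ᵀ)) * H₁ = H₁ * Λ₁
      ∧ ((1 / η₂) • (H₁ * H₁ᵀ)) * H₂ = H₂ * Λ₂ := by
  set Φ : Matrix (Fin N) (Fin d) ℝ := Matrix.of (fun i a => φ i a) with hΦ
  have hW₁' : W₁ = (1 / η₁) • (Φᵀ * H₁) := by
    rw [hW₁]
    congr 1
    ext a k
    simp [Matrix.sum_apply, Matrix.mul_apply, Matrix.vecMulVec_apply, hΦ, hH₁]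
  have hW₂' : W₂ = (1 / η₂) • (H₁ᵀ * H₂) := by
    rw [hW₂]
    congr 1
    ext a k
    simp [Matrix.sum_apply, Matrix.mul_apply, Matrix.vecMulVec_apply, hH₁, hH₂]
  have hK₁' : K₁ = Φ * Φᵀ := by
    ext i j
    simp [hK₁, Matrix.mul_apply, dotProduct, hΦ]
  -- matrix form of the first stationarity condition
  have hC : Φ * W₁ = H₁ * Λ₁ - H₂ * W₂ᵀ := by
    ext i k
    have := congrFun (hstat₁ i) k
    simp only [Matrix.mulVec, Matrix.transpose_apply, dotProduct, Pi.sub_apply] at this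
    simp only [Matrix.sub_apply, Matrix.mul_apply, hΛ₁, Matrix.mul_diagonal,
      Matrix.transpose_apply, hΦ, Matrix.of_apply, hH₁, hH₂]
    rw [show ∑ a, φ i a * W₁ a k = ∑ a, W₁ a k * φ i a from by
      exact Finset.sum_congr rfl fun a _ => mul_comm _ _]
    rw [this]
    simp [hΛ₁, Matrix.mulVec, dotProduct, Matrix.diagonal_apply, mul_comm]
  -- matrix form of the second stationarity condition
  have hD : H₁ * W₂ = H₂ * Λ₂ := by
    ext i k
    have := congrFun (hstat₂ i) k
    simp only [Matrix.mulVec, Matrix.transpose_apply, dotProduct] at this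
    simp only [Matrix.mul_apply, hH₁, hH₂]
    rw [show ∑ a, h1 i a * W₂ a k = ∑ a, W₂ a k * h1 i a from by
      exact Finset.sum_congr rfl fun a _ => mul_comm _ _]
    rw [this]
    simp [hΛ₂, Matrix.mulVec, dotProduct, Matrix.diagonal_apply, mul_comm]
  constructor
  · have h1eq : (1 / η₁) • (K₁ * H₁) = H₁ * Λ₁ - (1 / η₂) • (H₂ * H₂ᵀ * H₁) := by
      calc (1 / η₁) • (K₁ * H₁) = Φ * W₁ := by
            rw [hW₁', hK₁', Matrix.mul_smul, Matrix.mul_assoc]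
        _ = H₁ * Λ₁ - H₂ * W₂ᵀ := hC
        _ = H₁ * Λ₁ - (1 / η₂) • (H₂ * H₂ᵀ * H₁) := by
            rw [hW₂']
            rw [Matrix.transpose_smul, Matrix.transpose_mul, Matrix.transpose_transpose,
              Matrix.mul_smul, Matrix.mul_assoc]
    rw [Matrix.add_mul, Matrix.smul_mul, Matrix.smul_mul, h1eq]
    abel
  · calc ((1 / η₂) • (H₁ * H₁ᵀ)) * H₂ = H₁ * W₂ := by
          rw [hW₂', Matrix.mul_smul, Matrix.smul_mul, Matrix.mul_assoc]
      _ = H₂ * Λ₂ := hD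
end

section
/- Let d, s, N be positive integers, let φ₁,…,φ_N ∈ ℝ^d, let η be a nonzero real, let Λ be a real diagonal s×s matrix, let h₁,…,h_N ∈ ℝ^s, and let W = (1/η)·Σ_{i=1}^{N} φᵢhᵢᵀ. If Wᵀφᵢ = Λhᵢ for all i = 1,…,N, then the RKM-KPCA objective vanishes: −Σ_{i=1}^{N} φᵢᵀWhᵢ + (1/2)·Σ_{i=1}^{N} hᵢᵀΛhᵢ + (η/2)·trace(WᵀW) = 0. -/
open Matrix Finset

lemma trace_transpose_mul_vecMulVec {d s : ℕ} (W : Matrix (Fin d) (Fin s) ℝ)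
    (u : Fin d → ℝ) (v : Fin s → ℝ) :
    (Wᵀ * Matrix.vecMulVec u v).trace = u ⬝ᵥ W.mulVec v := by
  simp only [Matrix.trace, Matrix.diag, Matrix.mul_apply, Matrix.vecMulVec_apply,
    Matrix.transpose_apply, dotProduct, Matrix.mulVec, Finset.mul_sum]
  rw [Finset.sum_comm]
  apply Finset.sum_congr rfl
  intro k _
  apply Finset.sum_congr rfl
  intro j _
  ring

/-- Every stationary point of the RKM-KPCA objective is a zero of the
objective: if `W = (1/η)Σᵢ φᵢhᵢᵀ` and `Wᵀφᵢ = Λhᵢ` for all `i`, then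
`−Σᵢ φᵢᵀWhᵢ + (1/2)Σᵢ hᵢᵀΛhᵢ + (η/2)tr(WᵀW) = 0`. -/
theorem rkm_kpca_objective_vanishes_at_stationary_points
    (d s N : ℕ) (hd : 0 < d) (hs : 0 < s) (hN : 0 < N)
    (φ : Fin N → (Fin d → ℝ)) (η : ℝ) (hη : η ≠ 0)
    (dvec : Fin s → ℝ) (Λ : Matrix (Fin s) (Fin s) ℝ) (hΛ : Λ = Matrix.diagonal dvec)
    (h : Fin N → (Fin s → ℝ))
    (W : Matrix (Fin d) (Fin s) ℝ)
    (hW : W = (1 / η) • ∑ i, Matrix.vecMulVec (φ i) (h i))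
    (hstat : ∀ i, Wᵀ.mulVec (φ i) = Λ.mulVec (h i)) :
    -(∑ i, (φ i) ⬝ᵥ (W.mulVec (h i)))
      + (1 / 2) * ∑ i, (h i) ⬝ᵥ (Λ.mulVec (h i))
      + (η / 2) * (Wᵀ * W).trace = 0 := by
  have key : ∀ i, (φ i) ⬝ᵥ (W.mulVec (h i)) = (h i) ⬝ᵥ (Λ.mulVec (h i)) := by
    intro i
    rw [Matrix.dotProduct_mulVec, ← Matrix.mulVec_transpose, hstat i,
      dotProduct_comm]
  have htr : (Wᵀ * W).trace = (1 / η) * ∑ i, (h i) ⬝ᵥ (Λ.mulVec (h i)) := by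
    nth_rewrite 2 [hW]
    rw [Matrix.mul_smul, Matrix.trace_smul, Matrix.mul_sum, Matrix.trace_sum]
    simp only [trace_transpose_mul_vecMulVec, key, smul_eq_mul]
  simp only [key] at *
  rw [htr]
  field_simp
  ring
end

section
/- Let d, s₁, s₂, N be positive integers, let Φ₁ be a real N×d matrix (whose i-th row is the feature vector of training sample i), let H₁ ∈ ℝ^{N×s₁}, H₂ ∈ ℝ^{N×s₂}, let Λ₁, Λ₂ be real diagonal matrices of sizes s₁×s₁, s₂×s₂, let η₁, η₂ be nonzero reals, and suppose Λ₁ is invertible and the matrix A = Λ₂ − (1/η₂²)·H₂ᵀH₁Λ₁⁻¹H₁ᵀH₂ is invertible. If an out-of-sample feature vector φ* ∈ ℝ^d and hidden features h⁽¹⁾* ∈ ℝ^{s₁}, h⁽²⁾* ∈ ℝ^{s₂} satisfy the stationarity equations ((1/η₁)·Φ₁ᵀH₁)ᵀ·φ* = Λ₁·h⁽¹⁾* − ((1/η₂)·H₁ᵀH₂)·h⁽²⁾* and ((1/η₂)·H₁ᵀH₂)ᵀ·h⁽¹⁾* = Λ₂·h⁽²⁾*, then h⁽²⁾* = (1/(η₁η₂))·A⁻¹·H₂ᵀH₁Λ₁⁻¹H₁ᵀ·Φ₁φ*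 and h⁽¹⁾* = Λ₁⁻¹·((1/η₁)·H₁ᵀΦ₁φ* + (1/η₂)·H₁ᵀH₂·h⁽²⁾*). -/
open Matrix Finset

/-- Out-of-sample extension of two-level deep kernel PCA with linear second
level: the stationarity equations for an unseen point determine its hidden
features `h⁽¹⁾*, h⁽²⁾*` in closed form. -/
theorem dkpca_out_of_sample_extension
    (d s₁ s₂ N : ℕ) (hd : 0 < d) (hs₁ : 0 < s₁) (hs₂ : 0 < s₂) (hN : 0 < N)
    (Φ₁ : Matrix (Fin N) (Fin d) ℝ)
    (H₁ : Matrix (Fin N) (Fin s₁) ℝ) (H₂ : Matrix (Fin N) (Fin s₂) ℝ)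
    (d1 : Fin s₁ → ℝ) (Λ₁ : Matrix (Fin s₁) (Fin s₁) ℝ) (hΛ₁ : Λ₁ = Matrix.diagonal d1)
    (d2 : Fin s₂ → ℝ) (Λ₂ : Matrix (Fin s₂) (Fin s₂) ℝ) (hΛ₂ : Λ₂ = Matrix.diagonal d2)
    (η₁ η₂ : ℝ) (hη₁ : η₁ ≠ 0) (hη₂ : η₂ ≠ 0)
    (hΛ₁inv : IsUnit Λ₁.det)
    (A : Matrix (Fin s₂) (Fin s₂) ℝ)
    (hA : A = Λ₂ - (1 / η₂ ^ 2) • (H₂ᵀ * H₁ * Λ₁⁻¹ * H₁ᵀ * H₂))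
    (hAinv : IsUnit A.det)
    (φs : Fin d → ℝ) (h1s : Fin s₁ → ℝ) (h2s : Fin s₂ → ℝ)
    (hstat₁ : ((1 / η₁) • (Φ₁ᵀ * H₁))ᵀ.mulVec φs
        = Λ₁.mulVec h1s - ((1 / η₂) • (H₁ᵀ * H₂)).mulVec h2s)
    (hstat₂ : ((1 / η₂) • (H₁ᵀ * H₂))ᵀ.mulVec h1s = Λ₂.mulVec h2s) :
    h2s = (1 / (η₁ * η₂)) •
        (A⁻¹ * (H₂ᵀ * H₁ * Λ₁⁻¹ * H₁ᵀ)).mulVec (Φ₁.mulVec φs)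
    ∧ h1s = Λ₁⁻¹.mulVec
        ((1 / η₁) • (H₁ᵀ.mulVec (Φ₁.mulVec φs))
          + (1 / η₂) • ((H₁ᵀ * H₂).mulVec h2s)) := by
  have hinv : Λ₁⁻¹ * Λ₁ = 1 := Matrix.nonsing_inv_mul _ hΛ₁inv
  have hAinv' : A⁻¹ * A = 1 := Matrix.nonsing_inv_mul _ hAinv
  have e1 : Λ₁.mulVec h1s
      = (1 / η₁) • (H₁ᵀ.mulVec (Φ₁.mulVec φs))
        + (1 / η₂) • ((H₁ᵀ * H₂).mulVec h2s) := by
    have h := hstat₁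
    rw [Matrix.transpose_smul, Matrix.transpose_mul, Matrix.transpose_transpose,
      Matrix.smul_mulVec, Matrix.smul_mulVec,
      ← Matrix.mulVec_mulVec, eq_sub_iff_add_eq] at h
    exact h.symm
  have h1eq : h1s = Λ₁⁻¹.mulVec
      ((1 / η₁) • (H₁ᵀ.mulVec (Φ₁.mulVec φs))
        + (1 / η₂) • ((H₁ᵀ * H₂).mulVec h2s)) := by
    have := congrArg Λ₁⁻¹.mulVec e1
    rwa [Matrix.mulVec_mulVec, hinv, Matrix.one_mulVec] at this
  have hs2' : Λ₂.mulVec h2s = (1 / η₂) • (H₂ᵀ * H₁).mulVec h1s := by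
    rw [← hstat₂, Matrix.transpose_smul, Matrix.transpose_mul,
      Matrix.transpose_transpose, Matrix.smul_mulVec]
  have h2key : A.mulVec h2s
      = (1 / (η₁ * η₂)) • (H₂ᵀ * H₁ * Λ₁⁻¹ * H₁ᵀ).mulVec (Φ₁.mulVec φs) := by
    rw [hA, Matrix.sub_mulVec, hs2', Matrix.smul_mulVec, h1eq]
    simp only [Matrix.mulVec_add, Matrix.mulVec_smul, ← Matrix.mulVec_mulVec]
    module
  have h2eq : h2s = (1 / (η₁ * η₂)) •
      (A⁻¹ * (H₂ᵀ * H₁ * Λ₁⁻¹ * H₁ᵀ)).mulVec (Φ₁.mulVec φs) := by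
    have := congrArg A⁻¹.mulVec h2key
    rwa [Matrix.mulVec_mulVec, hAinv', Matrix.one_mulVec, Matrix.mulVec_smul,
      Matrix.mulVec_mulVec] at this
  exact ⟨h2eq, h1eq⟩
end
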